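/- arXiv:1205.1769 — 2 statements merged into one kernel-verified Lean document; each statement's English description precedes it below -/
import Mathlib

section
/- Let σ : [0,1] → ℝ be continuous, strictly positive, and nonincreasing. If g : [0,1] → ℝ is absolutely continuous with g(0)=0 and for all t ∈ [0,1], ∫₀ᵗ g'(s)²/(2σ(s)²) ds ≤ t, then g(1) ≤ √2 ∫₀¹ σ(s) ds. -/
/-!
Pointwise, `√2 g' ≤ σ e + σ` with `e = g'²/(2σ²)` (AM–GM). It remains to see that
`∫₀¹ σ e ≤ ∫₀¹ σ`. By the layer-cake formula both sides integrate, over the levels `t > 0`,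
the mass of the superlevel set `{σ > t}`, once for the measure `e ds` and once for `ds`.
Since `σ` is nonincreasing these sets are initial segments of `[0,1]`, and on initial
segments the energy constraint `∫₀ᵗ e ≤ t` says exactly that `e ds` is dominated by `ds`.
-/

open MeasureTheory Set intervalIntegral

theorem measure_le_volume_of_initial_segment {ν : Measure ℝ} {a b : ℝ}
    (hν : ∀ c ∈ Icc a b, ν (Icc a c) ≤ ENNReal.ofReal (c - a)) {S : Set ℝ}
    (hSsub : S ⊆ Icc a b) (hSinit : ∀ s ∈ S, Icc a s ⊆ S) : ν S ≤ volume S := by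
  rcases S.eq_empty_or_nonempty with rfl | hne
  · simp
  have hbdd : BddAbove S := ⟨b, fun s hs => (hSsub hs).2⟩
  have hsup : sSup S ∈ Icc a b :=
    ⟨(hSsub hne.some_mem).1.trans (le_csSup hbdd hne.some_mem),
      csSup_le hne fun s hs => (hSsub hs).2⟩
  calc ν S ≤ ν (Icc a (sSup S)) := measure_mono fun s hs => ⟨(hSsub hs).1, le_csSup hbdd hs⟩
    _ ≤ ENNReal.ofReal (sSup S - a) := hν _ hsup
    _ = volume (Ico a (sSup S)) := Real.volume_Ico.symm
    _ ≤ volume S := measure_mono fun r hr => by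
        obtain ⟨s, hs, hrs⟩ := exists_lt_of_lt_csSup hne hr.2
        exact hSinit s hs ⟨hr.1, hrs.le⟩

theorem lintegral_le_lintegral_volume_of_antitoneOn {ν : Measure ℝ} {a b : ℝ}
    (hν : ∀ c ∈ Icc a b, ν (Icc a c) ≤ ENNReal.ofReal (c - a)) {f : ℝ → ℝ}
    (hf : AntitoneOn f (Icc a b)) (hf0 : ∀ s ∈ Icc a b, 0 ≤ f s) :
    ∫⁻ s in Icc a b, ENNReal.ofReal (f s) ∂ν ≤ ∫⁻ s in Icc a b, ENNReal.ofReal (f s) := by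
  have hf0_ae (μ : Measure ℝ) : 0 ≤ᵐ[μ.restrict (Icc a b)] f :=
    ae_restrict_of_forall_mem measurableSet_Icc hf0
  rw [lintegral_eq_lintegral_meas_lt _ (hf0_ae ν)
      (aemeasurable_restrict_of_antitoneOn measurableSet_Icc hf),
    lintegral_eq_lintegral_meas_lt _ (hf0_ae volume)
      (aemeasurable_restrict_of_antitoneOn measurableSet_Icc hf)]
  refine lintegral_mono fun t => ?_
  rw [Measure.restrict_apply' measurableSet_Icc, Measure.restrict_apply' measurableSet_Icc]
  refine measure_le_volume_of_initial_segment hν inter_subset_right fun s hs r hr => ?_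
  have hrab : r ∈ Icc a b := ⟨hr.1, hr.2.trans hs.2.2⟩
  exact ⟨hs.1.trans_le (hf hrab hs.2 hr.2), hrab⟩

theorem integral_mul_le_integral_of_antitoneOn {a b : ℝ} (hab : a ≤ b) {f e : ℝ → ℝ}
    (hf : AntitoneOn f (Icc a b)) (hf0 : ∀ s ∈ Icc a b, 0 ≤ f s)
    (he : IntegrableOn e (Icc a b)) (he0 : ∀ s ∈ Icc a b, 0 ≤ e s)
    (hE : ∀ c ∈ Icc a b, ∫ s in a..c, e s ≤ c - a) :
    ∫ s in a..b, f s * e s ≤ ∫ s in a..b, f s := by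
  set ν := volume.withDensity fun s => ENNReal.ofReal (e s)
  have hν : ∀ c ∈ Icc a b, ν (Icc a c) ≤ ENNReal.ofReal (c - a) := by
    intro c hc
    have hsub : Icc a c ⊆ Icc a b := Icc_subset_Icc_right hc.2
    rw [withDensity_apply', ← ofReal_integral_eq_lintegral_ofReal (he.mono_set hsub)
      (ae_restrict_of_forall_mem measurableSet_Icc fun s hs => he0 s (hsub hs)),
      integral_Icc_eq_integral_Ioc, ← intervalIntegral.integral_of_le hc.1]
    exact ENNReal.ofReal_le_ofReal (hE c hc)
  have hfm : AEStronglyMeasurable f (volume.restrict (Icc a b)) :=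
    (aemeasurable_restrict_of_antitoneOn measurableSet_Icc hf).aestronglyMeasurable
  have hfe : ∫⁻ s in Icc a b, ENNReal.ofReal (f s * e s)
      = ∫⁻ s in Icc a b, ENNReal.ofReal (f s) ∂ν := by
    rw [restrict_withDensity measurableSet_Icc, lintegral_withDensity_eq_lintegral_mul₀
      he.aemeasurable.ennreal_ofReal hfm.aemeasurable.ennreal_ofReal]
    refine setLIntegral_congr_fun measurableSet_Icc fun s hs => ?_
    simp only [Pi.mul_apply, ENNReal.ofReal_mul (hf0 s hs), mul_comm]
  rw [intervalIntegral.integral_of_le hab, intervalIntegral.integral_of_le hab,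
    ← integral_Icc_eq_integral_Ioc, ← integral_Icc_eq_integral_Ioc,
    integral_eq_lintegral_of_nonneg_ae (ae_restrict_of_forall_mem measurableSet_Icc
      fun s hs => mul_nonneg (hf0 s hs) (he0 s hs)) (hfm.mul he.aestronglyMeasurable),
    integral_eq_lintegral_of_nonneg_ae (ae_restrict_of_forall_mem measurableSet_Icc hf0) hfm,
    hfe]
  exact ENNReal.toReal_mono (hf.integrableOn_isCompact isCompact_Icc).lintegral_lt_top.ne
    (lintegral_le_lintegral_volume_of_antitoneOn hν hf hf0)

theorem sqrt_two_mul_le_mul_sq_div_add {c : ℝ} (hc : 0 < c) (x : ℝ) :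
    √2 * x ≤ c * (x ^ 2 / (2 * c ^ 2)) + c := by
  have hsq : (√2) ^ 2 = 2 := Real.sq_sqrt zero_le_two
  have hdiff : c * (x ^ 2 / (2 * c ^ 2)) + c - √2 * x = (x - √2 * c) ^ 2 / (2 * c) := by
    field_simp
    linear_combination (-c ^ 2) * hsq
  have : 0 ≤ (x - √2 * c) ^ 2 / (2 * c) := by positivity
  linarith

theorem variational_lemma_general
    (σ : ℝ → ℝ) (hσc : ContinuousOn σ (Icc 0 1))
    (hσpos : ∀ t ∈ Icc (0:ℝ) 1, 0 < σ t)
    (hσmono : AntitoneOn σ (Icc 0 1))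
    (g g' : ℝ → ℝ)
    (hg'int : IntegrableOn g' (Icc 0 1))
    (hAC : ∀ t ∈ Icc (0:ℝ) 1, g t = ∫ s in (0:ℝ)..t, g' s)
    (hEnergyInt : IntegrableOn (fun s => (g' s) ^ 2 / (2 * (σ s) ^ 2)) (Icc 0 1))
    (hConstraint : ∀ t ∈ Icc (0:ℝ) 1,
      (∫ s in (0:ℝ)..t, (g' s) ^ 2 / (2 * (σ s) ^ 2)) ≤ t) :
    g 1 ≤ Real.sqrt 2 * ∫ s in (0:ℝ)..1, σ s := by
  set e : ℝ → ℝ := fun s => (g' s) ^ 2 / (2 * (σ s) ^ 2)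
  have h01 : (0:ℝ) ≤ 1 := zero_le_one
  have hσint : IntervalIntegrable σ volume 0 1 := hσc.intervalIntegrable_of_Icc h01
  have hσeint : IntervalIntegrable (fun s => σ s * e s) volume 0 1 :=
    (intervalIntegrable_iff_integrableOn_Icc_of_le h01).2
      (hEnergyInt.continuousOn_mul hσc isCompact_Icc)
  have hweighted : ∫ s in (0:ℝ)..1, σ s * e s ≤ ∫ s in (0:ℝ)..1, σ s :=
    integral_mul_le_integral_of_antitoneOn h01 hσmono (fun s hs => (hσpos s hs).le)
      hEnergyInt (fun s _ => by positivity) (by simpa using hConstraint)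
  have hpointwise : √2 * g 1 ≤ ∫ s in (0:ℝ)..1, σ s * e s + σ s := by
    rw [hAC 1 ⟨h01, le_rfl⟩, ← intervalIntegral.integral_const_mul]
    exact intervalIntegral.integral_mono_on h01
      (((intervalIntegrable_iff_integrableOn_Icc_of_le h01).2 hg'int).const_mul _) (hσeint.add hσint)
      fun s hs => sqrt_two_mul_le_mul_sq_div_add (hσpos s hs) (g' s)
  rw [intervalIntegral.integral_add hσeint hσint] at hpointwise
  have hsq : √2 * √2 = 2 := Real.mul_self_sqrt zero_le_two
  refine le_of_mul_le_mul_left ?_ (Real.sqrt_pos.2 two_pos)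
  linear_combination hpointwise + hweighted - (∫ s in (0:ℝ)..1, σ s) * hsq

/-- **Variational lemma (Lemma 2.2).** If `σ` is continuous, strictly positive and
nonincreasing on `[0,1]`, and `g` is absolutely continuous (with density `g'`),
`g 0 = 0`, and the cumulative energy constraint
`∫₀ᵗ g'(s)²/(2 σ(s)²) ds ≤ t` holds (with finite energy) for all `t ∈ [0,1]`,
then `g 1 ≤ √2 ∫₀¹ σ(s) ds`. -/
theorem variational_lemma
    (σ : ℝ → ℝ) (hσc : ContinuousOn σ (Icc 0 1))
    (hσpos : ∀ t ∈ Icc (0:ℝ) 1, 0 < σ t)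
    (hσmono : AntitoneOn σ (Icc 0 1))
    (g g' : ℝ → ℝ)
    (hg'int : IntegrableOn g' (Icc 0 1))
    (hAC : ∀ t ∈ Icc (0:ℝ) 1, g t = ∫ s in (0:ℝ)..t, g' s)
    (hg0 : g 0 = 0)
    (hEnergyInt : IntegrableOn (fun s => (g' s) ^ 2 / (2 * (σ s) ^ 2)) (Icc 0 1))
    (hConstraint : ∀ t ∈ Icc (0:ℝ) 1,
      (∫ s in (0:ℝ)..t, (g' s) ^ 2 / (2 * (σ s) ^ 2)) ≤ t) :
    g 1 ≤ Real.sqrt 2 * ∫ s in (0:ℝ)..1, σ s :=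
  variational_lemma_general σ hσc hσpos hσmono g g' hg'int hAC hEnergyInt hConstraint
end

section
/- Let B be a standard one-dimensional Brownian motion started at 0. There exist constants c, c₄ > 0 such that for all T ≥ 1, P( Leb{s ∈ [0,T] : |B_s| ≤ c T^{1/3}} ≥ T/2 ) ≤ e^{−c₄ T^{1/3}}. -/
open MeasureTheory ProbabilityTheory Set

/-- A standard one-dimensional Brownian motion started at `0` under the
probability measure `μ`: measurable marginals, continuous paths, Gaussian
increments of the right variance, and independent increments. -/
structure IsStdBrownianMotion {Ω : Type*} [MeasurableSpace Ω] (μ : Measure Ω)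
    (B : ℝ → Ω → ℝ) : Prop where
  isProb : IsProbabilityMeasure μ
  meas : ∀ t, Measurable (B t)
  start : ∀ᵐ ω ∂μ, B 0 ω = 0
  cont : ∀ᵐ ω ∂μ, Continuous fun t => B t ω
  incr : ∀ s t : ℝ, 0 ≤ s → s ≤ t →
    μ.map (fun ω => B t ω - B s ω) = gaussianReal 0 (Real.toNNReal (t - s))
  indep : ∀ (n : ℕ) (ts : ℕ → ℝ), Monotone ts → 0 ≤ ts 0 →
    iIndepFun
      (fun i : Fin n => fun ω => B (ts (i + 1)) ω - B (ts i) ω) μ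

/-!
Cut `[0, T]` into `n ≍ T^{1/3}` blocks of length `D ≍ T^{2/3}`. If Brownian motion spends time
`T/2` within `a = c T^{1/3}` of the origin, then a sixth of the blocks contain a window of length
`3D/4` in which it spends time `D/8` near the origin. For any fixed set of `m` such windows, by
Markov's inequality and Fubini this has probability at most `(8/D)^m` times the integral, over
`m` times `s₁ < ⋯ < s_m` taken one per window, of `P(|B_{s_j}| ≤ a for all j)`. Consecutive times,
starting from `s₀ = 0` where `B` vanishes, are `D/4` apart, so the `m` independent increments
between them are Gaussians of variance at least `D/4` confined to `[-2a, 2a]`, which costs a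
factor `O(a/√D) = O(c)` each. Choosing `c` small makes this beat the `2ⁿ` choices of windows.
-/

open scoped ENNReal NNReal
open Real

lemma gaussianReal_Icc_le (m : ℝ) {v : ℝ≥0} (hv : v ≠ 0) (c d : ℝ) :
    gaussianReal m v (Icc c d) ≤ ENNReal.ofReal ((d - c) / √(2 * π * v)) := by
  have hpdf : ∀ x, gaussianPDF m v x ≤ ENNReal.ofReal (√(2 * π * v))⁻¹ := fun x ↦ by
    refine ENNReal.ofReal_le_ofReal ?_
    rw [gaussianPDFReal_def]
    refine mul_le_of_le_one_right (by positivity) (Real.exp_le_one_iff.2 ?_)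
    exact div_nonpos_of_nonpos_of_nonneg (neg_nonpos.2 (sq_nonneg _)) (by positivity)
  calc gaussianReal m v (Icc c d) = ∫⁻ x in Icc c d, gaussianPDF m v x := gaussianReal_apply m hv _
    _ ≤ ∫⁻ _ in Icc c d, ENNReal.ofReal (√(2 * π * v))⁻¹ := lintegral_mono hpdf
    _ = ENNReal.ofReal ((d - c) / √(2 * π * v)) := by
      rw [setLIntegral_const, Real.volume_Icc, ← ENNReal.ofReal_mul (by positivity), div_eq_mul_inv,
        mul_comm]

open Finset in
lemma Finset.sum_le_card_filter_mul_add {ι : Type*} (s : Finset ι) {f : ι → ℝ≥0∞} {M : ℝ≥0∞}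
    (θ : ℝ≥0∞) (hf : ∀ i ∈ s, f i ≤ M) :
    ∑ i ∈ s, f i ≤ #{i ∈ s | θ ≤ f i} * M + #s * θ := by
  rw [← sum_filter_add_sum_filter_not s (θ ≤ f ·)]
  refine add_le_add ?_ ?_
  · rw [← nsmul_eq_mul]
    exact sum_le_card_nsmul _ _ M fun i hi ↦ hf i (mem_filter.1 hi).1
  · calc ∑ i ∈ s with ¬θ ≤ f i, f i ≤ #{i ∈ s | ¬θ ≤ f i} • θ :=
          sum_le_card_nsmul _ _ θ fun i hi ↦ (not_le.1 (mem_filter.1 hi).2).le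
      _ ≤ #s • θ := nsmul_le_nsmul_left zero_le (card_le_card (filter_subset _ s))
      _ = #s * θ := nsmul_eq_mul _ _

/-- The last three quarters of the block `[i D, (i + 1) D]`; leaving out the first quarter keeps
times taken in different windows `D / 4` apart. -/
def gridWindow (D : ℝ) (i : ℕ) : Set ℝ := Icc (i * D + D / 4) ((i + 1) * D)

lemma volume_gridWindow (D : ℝ) (i : ℕ) : volume (gridWindow D i) = ENNReal.ofReal (3 * D / 4) := by
  rw [gridWindow, Real.volume_Icc]; ring_nf

lemma Icc_zero_mul_subset_biUnion_gridWindow (n : ℕ) (D : ℝ) :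
    Icc 0 (n * D) ⊆ {(n : ℝ) * D} ∪
      ⋃ i ∈ Finset.range n, (gridWindow D i ∪ Icc (i * D) (i * D + D / 4)) := by
  intro s hs
  rcases hs.2.eq_or_lt with h | h
  · exact Or.inl h
  have hcov := Ico_subset_biUnion_Ico n (fun i : ℕ ↦ (i : ℝ) * D)
  simp only [Nat.cast_zero, zero_mul, Nat.cast_add, Nat.cast_one] at hcov
  obtain ⟨i, hi, hsi⟩ := mem_iUnion₂.1 (hcov ⟨hs.1, h⟩)
  refine Or.inr (mem_iUnion₂.2 ⟨i, hi, ?_⟩)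
  rcases le_or_gt s (i * D + D / 4) with h' | h'
  · exact Or.inr ⟨hsi.1, h'⟩
  · exact Or.inl ⟨h'.le, hsi.2.le⟩

open Finset in
lemma le_six_mul_card_of_half_le_volume (p : ℝ → Prop) (n : ℕ) {D : ℝ} (hD : 0 < D)
    (h : ENNReal.ofReal (n * D / 2) ≤ volume {s ∈ Icc 0 (n * D) | p s}) :
    n ≤ 6 * #{i ∈ range n | ENNReal.ofReal (D / 8) ≤ volume {s ∈ gridWindow D i | p s}} := by
  set f : ℕ → ℝ≥0∞ := fun i ↦ volume {s ∈ gridWindow D i | p s}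
  set G := #{i ∈ range n | ENNReal.ofReal (D / 8) ≤ f i}
  have hcast (N : ℕ) (r : ℝ) : (N : ℝ≥0∞) * ENNReal.ofReal r = ENNReal.ofReal (N * r) := by
    rw [ENNReal.ofReal_mul (Nat.cast_nonneg _), ENNReal.ofReal_natCast]
  have hcover :
      volume {s ∈ Icc 0 (n * D) | p s} ≤ ∑ i ∈ range n, (f i + ENNReal.ofReal (D / 4)) := by
    calc volume {s ∈ Icc 0 (n * D) | p s}
        ≤ volume ({(n : ℝ) * D} ∪
            ⋃ i ∈ range n, ({s ∈ gridWindow D i | p s} ∪ Icc (i * D) (i * D + D / 4))) := by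
          refine measure_mono fun s ⟨hs, hp⟩ ↦ ?_
          rcases Icc_zero_mul_subset_biUnion_gridWindow n D hs with h | h
          · exact Or.inl h
          obtain ⟨i, hi, hs'⟩ := mem_iUnion₂.1 h
          exact Or.inr (mem_iUnion₂.2 ⟨i, hi, hs'.imp (⟨·, hp⟩) id⟩)
      _ ≤ ∑ i ∈ range n, (f i + ENNReal.ofReal (D / 4)) := by
          refine (measure_union_le _ _).trans ?_
          rw [measure_singleton, zero_add]
          refine (measure_biUnion_finset_le _ _).trans (sum_le_sum fun i _ ↦ ?_)
          refine (measure_union_le _ _).trans_eq ?_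
          rw [Real.volume_Icc, add_sub_cancel_left]
  have hsum : ∑ i ∈ range n, f i ≤ G * ENNReal.ofReal (3 * D / 4) + n * ENNReal.ofReal (D / 8) := by
    simpa using sum_le_card_filter_mul_add (range n) (ENNReal.ofReal (D / 8)) fun i _ ↦
      (measure_mono (sep_subset _ _)).trans (volume_gridWindow D i).le
  have hreal : (n : ℝ) * D / 2 ≤ G * (3 * D / 4) + n * (D / 8) + n * (D / 4) := by
    rw [← ENNReal.ofReal_le_ofReal_iff (by positivity), ENNReal.ofReal_add (by positivity)
      (by positivity), ENNReal.ofReal_add (by positivity) (by positivity), ← hcast, ← hcast,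
      ← hcast]
    calc ENNReal.ofReal (n * D / 2) ≤ ∑ i ∈ range n, (f i + ENNReal.ofReal (D / 4)) :=
          h.trans hcover
      _ ≤ _ := by
          rw [sum_add_distrib, sum_const, card_range, nsmul_eq_mul]
          gcongr
  have : (n : ℝ) * D ≤ (6 * G : ℕ) * D := by push_cast; linarith
  exact_mod_cast le_of_mul_le_mul_right this hD

namespace IsStdBrownianMotion

variable {Ω : Type*} [MeasurableSpace Ω] {μ : Measure Ω} {B W : ℝ → Ω → ℝ}

lemma congr (hB : IsStdBrownianMotion μ B) (hW : ∀ t, Measurable (W t))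
    (hBW : ∀ᵐ ω ∂μ, ∀ t, B t ω = W t ω) : IsStdBrownianMotion μ W where
  isProb := hB.isProb
  meas := hW
  start := by filter_upwards [hB.start, hBW] with ω h0 h; rwa [← h]
  cont := by filter_upwards [hB.cont, hBW] with ω hc h; simpa only [← h] using hc
  incr s t hs hst := by
    rw [← hB.incr s t hs hst]
    exact Measure.map_congr (by filter_upwards [hBW] with ω h; simp only [h])
  indep n ts hts h0 := (hB.indep n ts hts h0).congr fun i ↦ by
    filter_upwards [hBW] with ω h; simp only [h]

lemma exists_measurable_uncurry_modification (hB : IsStdBrownianMotion μ B) :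
    ∃ W : ℝ → Ω → ℝ, IsStdBrownianMotion μ W ∧ Measurable (Function.uncurry W) ∧
      ∀ᵐ ω ∂μ, ∀ t, B t ω = W t ω := by
  classical
  set N := toMeasurable μ {ω | ¬Continuous fun t ↦ B t ω}
  have hN : μ N = 0 := by rw [measure_toMeasurable]; exact hB.cont
  set W : ℝ → Ω → ℝ := fun t ω ↦ if ω ∈ N then 0 else B t ω
  have hWm : ∀ t, Measurable (W t) := fun t ↦
    Measurable.ite (measurableSet_toMeasurable _ _) measurable_const (hB.meas t)
  have hWc : ∀ ω, Continuous fun t ↦ W t ω := fun ω ↦ by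
    by_cases hω : ω ∈ N
    · simp only [W, if_pos hω, continuous_const]
    · simp only [W, if_neg hω]
      exact not_not.1 fun h ↦ hω (subset_toMeasurable _ _ h)
  have hBW : ∀ᵐ ω ∂μ, ∀ t, B t ω = W t ω := by
    filter_upwards [measure_eq_zero_iff_ae_notMem.1 hN] with ω hω t
    simp only [W, if_neg hω]
  exact ⟨W, hB.congr hWm hBW, measurable_uncurry_of_continuous_of_measurable hWc hWm, hBW⟩

lemma measure_increment_mem_Icc_le (hB : IsStdBrownianMotion μ B) {s t g b : ℝ} (hs : 0 ≤ s)
    (hg : 0 < g) (hst : s + g ≤ t) (hb : 0 ≤ b) :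
    μ ((fun ω ↦ B t ω - B s ω) ⁻¹' Icc (-b) b) ≤ ENNReal.ofReal (2 * b / √(2 * π * g)) := by
  have hv : g ≤ (t - s).toNNReal := by rw [Real.coe_toNNReal _ (by linarith)]; linarith
  rw [← Measure.map_apply (f := fun ω ↦ B t ω - B s ω) ((hB.meas t).sub (hB.meas s))
    measurableSet_Icc, hB.incr s t hs (by linarith)]
  calc _ ≤ ENNReal.ofReal ((b - -b) / √(2 * π * (t - s).toNNReal)) :=
        gaussianReal_Icc_le 0 (by simp only [ne_eq, Real.toNNReal_eq_zero]; linarith) _ _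
    _ ≤ _ := by rw [sub_neg_eq_add, ← two_mul]; gcongr

lemma measure_forall_abs_le_le (hB : IsStdBrownianMotion μ B) {k : ℕ} {g a : ℝ} (hg : 0 < g)
    (ha : 0 ≤ a) (τ : Fin (k + 1) → ℝ) (hτ0 : τ 0 = 0)
    (hτ : ∀ i : Fin k, τ i.castSucc + g ≤ τ i.succ) :
    μ {ω | ∀ i : Fin k, |B (τ i.succ) ω| ≤ a} ≤ ENNReal.ofReal (4 * a / √(2 * π * g)) ^ k := by
  have hτm : Monotone τ := Fin.monotone_iff_le_succ.2 fun i ↦ by linarith [hτ i]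
  -- `indep` is stated for monotone sequences on all of `ℕ`: extend `τ` constantly past `k`.
  set ts : ℕ → ℝ := fun r ↦ τ (Fin.clamp r k)
  have hts : ∀ i : Fin k, ts i = τ i.castSucc ∧ ts (i + 1) = τ i.succ := fun i ↦
    ⟨congrArg τ (Fin.ext (min_eq_left i.isLt.le)), congrArg τ (Fin.ext (min_eq_left i.isLt))⟩
  have hts0 : 0 ≤ ts 0 := by simp [ts, Fin.clamp, ← hτ0]
  have hind := hB.indep k ts (hτm.comp Fin.clamp_monotone) hts0
  set η : Fin k → Ω → ℝ := fun i ω ↦ B (ts (i + 1)) ω - B (ts i) ω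
  have hsub : ∀ᵐ ω ∂μ, ω ∈ {ω | ∀ i : Fin k, |B (τ i.succ) ω| ≤ a} →
      ω ∈ ⋂ i ∈ Finset.univ, η i ⁻¹' Icc (-(2 * a)) (2 * a) := by
    filter_upwards [hB.start] with ω h0 hω
    have hall : ∀ j, |B (τ j) ω| ≤ a := Fin.cases (by simpa [hτ0, h0]) hω
    simp only [Finset.mem_univ, iInter_true, mem_iInter, mem_preimage, η]
    intro i
    rw [(hts i).1, (hts i).2]
    have h1 := abs_le.1 (hall i.succ)
    have h2 := abs_le.1 (hall i.castSucc)
    constructor <;> linarith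
  calc μ {ω | ∀ i : Fin k, |B (τ i.succ) ω| ≤ a}
      ≤ μ (⋂ i ∈ Finset.univ, η i ⁻¹' Icc (-(2 * a)) (2 * a)) := measure_mono_ae hsub
    _ = ∏ i, μ (η i ⁻¹' Icc (-(2 * a)) (2 * a)) :=
      hind.measure_inter_preimage_eq_mul _ fun _ _ ↦ measurableSet_Icc
    _ ≤ ∏ _i : Fin k, ENNReal.ofReal (4 * a / √(2 * π * g)) := by
      refine Finset.prod_le_prod' fun i _ ↦ ?_
      have hs : 0 ≤ ts i := (hts i).1 ▸ hτ0 ▸ hτm (Fin.zero_le _)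
      have hst : ts i + g ≤ ts (i + 1) := (hts i).1 ▸ (hts i).2 ▸ hτ i
      refine (hB.measure_increment_mem_Icc_le hs hg hst (by positivity)).trans_eq ?_
      congr 2; ring
    _ = ENNReal.ofReal (4 * a / √(2 * π * g)) ^ k := by simp

lemma measurable_volume_occupation (hBm : Measurable (Function.uncurry B))
    {I : Set ℝ} (hI : MeasurableSet I) (a : ℝ) :
    Measurable fun ω ↦ volume {s ∈ I | |B s ω| ≤ a} :=
  measurable_measure_prodMk_left (s := {p : Ω × ℝ | p.2 ∈ I ∧ |B p.2 p.1| ≤ a})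
    ((hI.preimage measurable_snd).inter (measurableSet_le (hBm.comp measurable_swap).abs
      measurable_const))

lemma lintegral_prod_occupation_le (hB : IsStdBrownianMotion μ B)
    (hBm : Measurable (Function.uncurry B)) {k : ℕ} {g a : ℝ} (hg : 0 < g) (ha : 0 ≤ a)
    (I : Fin k → Set ℝ) (hI : ∀ j, MeasurableSet (I j)) (hI₀ : ∀ j, ∀ t ∈ I j, g ≤ t)
    (hsep : ∀ i j, i < j → ∀ s ∈ I i, ∀ t ∈ I j, s + g ≤ t) :
    ∫⁻ ω, ∏ j, volume {s ∈ I j | |B s ω| ≤ a} ∂μ ≤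
      (∏ j, volume (I j)) * ENNReal.ofReal (4 * a / √(2 * π * g)) ^ k := by
  have := hB.isProb
  set Q := ENNReal.ofReal (4 * a / √(2 * π * g))
  set E : Set (Ω × (Fin k → ℝ)) := {p | ∀ j, p.2 j ∈ I j ∧ |B (p.2 j) p.1| ≤ a}
  have hE : MeasurableSet E := by
    have hBj (j : Fin k) : Measurable fun p : Ω × (Fin k → ℝ) ↦ B (p.2 j) p.1 :=
      hBm.comp (f := fun p : Ω × (Fin k → ℝ) ↦ (p.2 j, p.1))
        (((measurable_pi_apply j).comp measurable_snd).prodMk measurable_fst)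
    simp only [E, ofPred_forall, ofPred_and]
    exact MeasurableSet.iInter fun j ↦
      ((hI j).preimage ((measurable_pi_apply j).comp measurable_snd)).inter
        (measurableSet_le (hBj j).abs measurable_const)
  have hslice : ∀ s, μ ((·, s) ⁻¹' E) ≤ (univ.pi I).indicator (fun _ ↦ Q ^ k) s := by
    intro s
    by_cases hs : s ∈ univ.pi I
    · rw [indicator_of_mem hs]
      have hτ (i : Fin k) :
          ∀ l : Fin (k + 1), l < i.succ → (Fin.cons 0 s : Fin (k + 1) → ℝ) l + g ≤ s i :=
        Fin.cases (fun _ ↦ by simpa using hI₀ i _ (hs i trivial)) fun j hj ↦ by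
          simpa using hsep j i (Fin.succ_lt_succ_iff.1 hj) _ (hs j trivial) _ (hs i trivial)
      refine (measure_mono fun ω hω i ↦ ?_).trans (hB.measure_forall_abs_le_le hg ha (Fin.cons 0 s)
        rfl fun i ↦ by simpa using hτ i _ Fin.castSucc_lt_succ)
      simpa using (hω i).2
    · rw [indicator_of_notMem hs, nonpos_iff_eq_zero, ← measure_empty (μ := μ)]
      congr 1
      exact eq_empty_of_forall_notMem fun ω hω ↦ hs fun j _ ↦ (hω j).1
  calc ∫⁻ ω, ∏ j, volume {s ∈ I j | |B s ω| ≤ a} ∂μ = ∫⁻ ω, volume (Prod.mk ω ⁻¹' E) ∂μ := by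
        refine lintegral_congr fun ω ↦ ?_
        rw [← volume_pi_pi]
        congr 1
        ext s
        simp [E]
    _ = ∫⁻ s, μ ((·, s) ⁻¹' E) := by rw [← Measure.prod_apply hE, Measure.prod_apply_symm hE]
    _ ≤ ∫⁻ s, (univ.pi I).indicator (fun _ ↦ Q ^ k) s := lintegral_mono hslice
    _ = (∏ j, volume (I j)) * Q ^ k := by
        rw [lintegral_indicator_const (MeasurableSet.univ_pi hI), volume_pi_pi, mul_comm]

open Finset in
lemma measure_forall_mem_occupation_gridWindow_ge_le (hB : IsStdBrownianMotion μ B)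
    (hBm : Measurable (Function.uncurry B)) {D a : ℝ} (hD : 0 < D) (ha : 0 ≤ a) (S : Finset ℕ) :
    μ {ω | ∀ i ∈ S, ENNReal.ofReal (D / 8) ≤ volume {s ∈ gridWindow D i | |B s ω| ≤ a}} ≤
      (6 * ENNReal.ofReal (4 * a / √(2 * π * (D / 4)))) ^ #S := by
  set b := S.orderEmbOfFin rfl
  set θ := ENNReal.ofReal (D / 8)
  set Q := ENNReal.ofReal (4 * a / √(2 * π * (D / 4)))
  have hI₀ (j : Fin #S) : ∀ t ∈ gridWindow D (b j), D / 4 ≤ t := fun t ht ↦ by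
    have : 0 ≤ (b j : ℝ) * D := by positivity
    linarith [ht.1]
  have hsep (i j : Fin #S) (hij : i < j) :
      ∀ s ∈ gridWindow D (b i), ∀ t ∈ gridWindow D (b j), s + D / 4 ≤ t := fun s hs t ht ↦ by
    have : ((b i : ℕ) : ℝ) + 1 ≤ b j := by exact_mod_cast b.strictMono hij
    nlinarith [hs.2, ht.1]
  have hmeas : Measurable fun ω ↦ ∏ j, volume {s ∈ gridWindow D (b j) | |B s ω| ≤ a} :=
    Finset.measurable_prod _ fun j _ ↦ measurable_volume_occupation hBm measurableSet_Icc a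
  have hmarkov := mul_meas_ge_le_lintegral₀ (hmeas.aemeasurable (μ := μ)) (θ ^ #S)
  have hmoment := hB.lintegral_prod_occupation_le hBm (by positivity) ha
    (fun j ↦ gridWindow D (b j)) (fun _ ↦ measurableSet_Icc) hI₀ hsep
  simp only [volume_gridWindow, prod_const, card_univ, Fintype.card_fin] at hmoment
  have hθ : ENNReal.ofReal (3 * D / 4) = θ * 6 := by
    rw [← ENNReal.ofReal_ofNat, ← ENNReal.ofReal_mul (by positivity)]; ring_nf
  rw [hθ, mul_pow, mul_assoc, ← mul_pow] at hmoment
  have hθ0 : θ ≠ 0 := (ENNReal.ofReal_pos.2 (by positivity)).ne'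
  refine (ENNReal.mul_le_mul_iff_right (a := θ ^ #S) (pow_ne_zero _ hθ0)
    (ENNReal.pow_ne_top ENNReal.ofReal_ne_top)).1 ?_
  refine le_trans ?_ (hmarkov.trans hmoment)
  refine mul_le_mul_right (measure_mono fun ω hω ↦ ?_) _
  simpa using Finset.pow_card_le_prod univ _ _ fun j _ ↦ hω _ (S.orderEmbOfFin_mem rfl j)

open Finset in
lemma measure_occupation_Icc_ge_le (hB : IsStdBrownianMotion μ B)
    (hBm : Measurable (Function.uncurry B)) {T : ℝ} (hT : 1 ≤ T) :
    μ {ω | ENNReal.ofReal (T / 2) ≤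
        volume {s ∈ Icc (0:ℝ) T | |B s ω| ≤ rexp (-1) / 6144 * T ^ ((1:ℝ) / 3)}} ≤
      ENNReal.ofReal (rexp (-T ^ ((1:ℝ) / 3))) := by
  set x := T ^ ((1:ℝ) / 3)
  set m := ⌈x⌉₊
  set n := 6 * m
  set D := T / n
  set a := rexp (-1) / 6144 * x
  set Q := ENNReal.ofReal (4 * a / √(2 * π * (D / 4)))
  have hx : 1 ≤ x := Real.one_le_rpow hT (by norm_num)
  have hT3 : T = x ^ 3 := by
    rw [← Real.rpow_natCast, ← Real.rpow_mul (by linarith)]; norm_num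
  have hmx : x ≤ m := Nat.le_ceil x
  have hm2x : (m : ℝ) ≤ 2 * x := by linarith [Nat.ceil_lt_add_one (by linarith : 0 ≤ x)]
  have hn : (0 : ℝ) < n := by push_cast [n]; linarith
  have hnD : (n : ℝ) * D = T := mul_div_cancel₀ T hn.ne'
  have hD : 0 < D := div_pos (by linarith) hn
  -- Blocks have length `D ≥ x² / 12`, which makes the factor `6 Q` paid per window at most
  -- `e⁻¹ / 64`, while there are at most `2ⁿ = 64ᵐ` sets of `m` windows.
  have hQ : 384 * Q ≤ ENNReal.ofReal (rexp (-1)) := by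
    have hDx : x ^ 2 / 12 ≤ D := by
      rw [le_div_iff₀ hn, hT3]; push_cast [n]; nlinarith
    have hsqrt : x / 4 ≤ √(2 * π * (D / 4)) :=
      Real.le_sqrt_of_sq_le (by nlinarith [Real.pi_gt_three])
    have : 4 * a / √(2 * π * (D / 4)) ≤ rexp (-1) / 384 := by
      calc 4 * a / √(2 * π * (D / 4)) ≤ 4 * a / (x / 4) :=
            div_le_div_of_nonneg_left (by positivity) (by positivity) hsqrt
        _ = rexp (-1) / 384 := by field_simp; ring
    calc 384 * Q ≤ ENNReal.ofReal 384 * ENNReal.ofReal (rexp (-1) / 384) := by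
          rw [ENNReal.ofReal_ofNat]; exact mul_le_mul_right (ENNReal.ofReal_le_ofReal this) _
      _ = ENNReal.ofReal (rexp (-1)) := by rw [← ENNReal.ofReal_mul (by norm_num)]; ring_nf
  have hcover : {ω | ENNReal.ofReal (T / 2) ≤ volume {s ∈ Icc (0:ℝ) T | |B s ω| ≤ a}} ⊆
      ⋃ S ∈ powersetCard m (range n),
        {ω | ∀ i ∈ S, ENNReal.ofReal (D / 8) ≤ volume {s ∈ gridWindow D i | |B s ω| ≤ a}} := by
    intro ω hω
    have hG := le_six_mul_card_of_half_le_volume (fun s ↦ |B s ω| ≤ a) n hD (by rwa [hnD])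
    obtain ⟨S, hSG, hS⟩ := Finset.exists_subset_card_eq (show m ≤ #{i ∈ range n |
      ENNReal.ofReal (D / 8) ≤ volume {s ∈ gridWindow D i | |B s ω| ≤ a}} by omega)
    exact mem_iUnion₂.2 ⟨S, mem_powersetCard.2 ⟨hSG.trans (filter_subset _ _), hS⟩,
      fun i hi ↦ (mem_filter.1 (hSG hi)).2⟩
  calc _ ≤ ∑ S ∈ powersetCard m (range n),
        μ {ω | ∀ i ∈ S, ENNReal.ofReal (D / 8) ≤ volume {s ∈ gridWindow D i | |B s ω| ≤ a}} :=
        (measure_mono hcover).trans (measure_biUnion_finset_le _ _)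
    _ ≤ ∑ _S ∈ powersetCard m (range n), (6 * Q) ^ m := sum_le_sum fun S hS ↦
        (mem_powersetCard.1 hS).2 ▸
          hB.measure_forall_mem_occupation_gridWindow_ge_le hBm hD (by positivity) S
    _ ≤ 64 ^ m * (6 * Q) ^ m := by
        rw [sum_const, card_powersetCard, card_range, nsmul_eq_mul]
        gcongr
        exact_mod_cast (Nat.choose_le_two_pow n m).trans_eq (by rw [pow_mul]; norm_num)
    _ ≤ ENNReal.ofReal (rexp (-1)) ^ m := by
        rw [← mul_pow, ← mul_assoc, show (64 : ℝ≥0∞) * 6 = 384 by norm_num]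
        gcongr
    _ ≤ ENNReal.ofReal (rexp (-x)) := by
        rw [← ENNReal.ofReal_pow (exp_pos _).le, ← Real.exp_nat_mul]
        gcongr
        linarith

end IsStdBrownianMotion

/-- **Occupation-time estimate (Remark after Lemma 2.4).** There are constants
`c, c₄ > 0` such that for all `T ≥ 1`, the probability that a standard Brownian
motion spends at least time `T/2` in `[−c T^{1/3}, c T^{1/3}]` during `[0,T]`
is at most `exp(−c₄ T^{1/3})`. -/
theorem brownian_occupation_time_bound
    {Ω : Type*} [MeasurableSpace Ω] (μ : Measure Ω) (B : ℝ → Ω → ℝ)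
    (hB : IsStdBrownianMotion μ B) :
    ∃ c c₄ : ℝ, 0 < c ∧ 0 < c₄ ∧ ∀ T : ℝ, 1 ≤ T →
      μ {ω | ENNReal.ofReal (T / 2) ≤
          volume {s ∈ Icc (0:ℝ) T | |B s ω| ≤ c * T ^ ((1:ℝ)/3)}} ≤
        ENNReal.ofReal (Real.exp (-c₄ * T ^ ((1:ℝ)/3))) := by
  obtain ⟨W, hW, hWm, hBW⟩ := hB.exists_measurable_uncurry_modification
  refine ⟨rexp (-1) / 6144, 1, by positivity, one_pos, fun T hT ↦ ?_⟩
  rw [neg_one_mul]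
  refine le_of_eq_of_le (measure_congr (Filter.eventuallyEq_set.2 ?_))
    (hW.measure_occupation_Icc_ge_le hWm hT)
  filter_upwards [hBW] with ω h
  simp only [h]
end
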